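/- arXiv:1607.02673 — 3 statements merged into one kernel-verified Lean document; each statement's English description precedes it below -/
import Mathlib

section
/- If an n×n complex matrix H is diagonalizable with all eigenvalues real, then there exists a positive-definite Hermitian matrix V such that H† = V H V⁻¹. -/
open ComplexOrder Matrix

/-!
Write `H = P D P⁻¹` with `D` real diagonal, hence Hermitian. Then
`Hᴴ = (Pᴴ)⁻¹ D Pᴴ = (P Pᴴ)⁻¹ H (P Pᴴ)`, and `V = (P Pᴴ)⁻¹` is positive definite because `P` is
invertible.
-/

namespace Matrix

variable {n K : Type*} [Fintype n] [DecidableEq n] [Field K] [StarRing K]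

theorem IsHermitian.conjTranspose_mul_mul_inv {P D : Matrix n n K} (hP : IsUnit P)
    (hD : D.IsHermitian) :
    (P * D * P⁻¹)ᴴ = (P * Pᴴ)⁻¹ * (P * D * P⁻¹) * (P * Pᴴ) := by
  have := hP.invertible
  rw [conjTranspose_mul, conjTranspose_mul, hD.eq, conjTranspose_nonsing_inv, mul_inv_rev]
  simp [Matrix.mul_assoc]

end Matrix

theorem stmt_4 {n : ℕ} (H : Matrix (Fin n) (Fin n) ℂ)
    (P : Matrix (Fin n) (Fin n) ℂ) (d : Fin n → ℝ) (hP : IsUnit P)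
    (hdiag : H = P * Matrix.diagonal (fun i => (d i : ℂ)) * P⁻¹) :
    ∃ V : Matrix (Fin n) (Fin n) ℂ, V.IsHermitian ∧ V.PosDef ∧
      H.conjTranspose = V * H * V⁻¹ := by
  have hPPH : (P * Pᴴ).PosDef := .mul_conjTranspose_self P (vecMul_injective_iff_isUnit.mpr hP)
  have hD : (diagonal fun i => (d i : ℂ)).IsHermitian :=
    isHermitian_diagonal_iff.mpr fun i => Complex.conj_ofReal (d i)
  refine ⟨(P * Pᴴ)⁻¹, hPPH.inv.isHermitian, hPPH.inv, ?_⟩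
  rw [nonsing_inv_nonsing_inv _ ((isUnit_iff_isUnit_det _).mp hPPH.isUnit), hdiag]
  exact hD.conjTranspose_mul_mul_inv hP
end

section
/- If H is diagonalizable with biorthonormal systems H ψⱼ = λⱼ ψⱼ and H† φⱼ = λⱼ φⱼ with ⟨φᵢ, ψⱼ⟩ = δᵢⱼ, then V = Σⱼ φⱼ φⱼ† satisfies V H V⁻¹ = H† and V⁻¹ = Σⱼ ψⱼ ψⱼ†. -/
open Matrix

theorem stmt_5 {n : ℕ} (H : Matrix (Fin n) (Fin n) ℂ)
    (ψ φ : Fin n → Fin n → ℂ) (lam : Fin n → ℝ)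
    (hψ : ∀ j, H.mulVec (ψ j) = (lam j : ℂ) • ψ j)
    (hφ : ∀ j, H.conjTranspose.mulVec (φ j) = (lam j : ℂ) • φ j)
    (hbi : ∀ i j, star (φ i) ⬝ᵥ ψ j = if i = j then (1 : ℂ) else 0) :
    let V : Matrix (Fin n) (Fin n) ℂ := ∑ j, Matrix.vecMulVec (φ j) (star (φ j))
    V * H * V⁻¹ = H.conjTranspose ∧
      V⁻¹ = ∑ j, Matrix.vecMulVec (ψ j) (star (ψ j)) := by
  intro V
  set P : Matrix (Fin n) (Fin n) ℂ := Matrix.of (fun i j => ψ j i) with hP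
  set Q : Matrix (Fin n) (Fin n) ℂ := Matrix.of (fun i j => φ j i) with hQ
  set D : Matrix (Fin n) (Fin n) ℂ := Matrix.diagonal (fun j => (lam j : ℂ)) with hD
  have hQP : Qᴴ * P = 1 := by
    ext i j
    have := hbi i j
    simp only [dotProduct, Pi.star_apply] at this
    simp only [Matrix.mul_apply, Matrix.conjTranspose_apply, Matrix.one_apply, hP, hQ,
      Matrix.of_apply]
    exact this
  have hPQ : P * Qᴴ = 1 := mul_eq_one_comm.mp hQP
  have hQPH : Q * Pᴴ = 1 := by
    calc Q * Pᴴ = (P * Qᴴ)ᴴ := by simp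
    _ = 1 := by rw [hPQ]; simp
  have hPQH : Pᴴ * Q = 1 := mul_eq_one_comm.mp hQPH
  have hHP : H * P = P * D := by
    ext i j
    have := congrFun (hψ j) i
    simp only [Matrix.mulVec, dotProduct, Pi.smul_apply, smul_eq_mul] at this
    simp [Matrix.mul_apply, hP, hD, Matrix.diagonal, this, mul_comm]
  have hHQ : H.conjTranspose * Q = Q * D := by
    ext i j
    have := congrFun (hφ j) i
    simp only [Matrix.mulVec, dotProduct, Pi.smul_apply, smul_eq_mul] at this
    simp only [Matrix.conjTranspose_apply] at this
    simp only [Matrix.mul_apply, hQ, hD, Matrix.of_apply, Matrix.diagonal,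
      Matrix.conjTranspose_apply]
    rw [this]
    simp only [mul_ite, mul_zero, Finset.sum_ite_eq', Finset.mem_univ, if_true]
    ring

  have hDH : Dᴴ = D := by
    ext i j
    by_cases h : i = j
    · subst h; simp [hD, Matrix.conjTranspose_apply]
    · simp [hD, Matrix.conjTranspose_apply, Matrix.diagonal_apply_ne, h, Ne.symm h]
  have hQH : Qᴴ * H = D * Qᴴ := by
    have := congrArg Matrix.conjTranspose hHQ
    simpa [Matrix.conjTranspose_mul, hDH] using this
  have hV : V = Q * Qᴴ := by
    ext i k
    simp [Matrix.mul_apply, Matrix.conjTranspose_apply, V, Matrix.vecMulVec,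
      Matrix.sum_apply, hQ]
  have hW : (∑ j, Matrix.vecMulVec (ψ j) (star (ψ j))) = P * Pᴴ := by
    ext i k
    simp [Matrix.mul_apply, Matrix.conjTranspose_apply, Matrix.vecMulVec,
      Matrix.sum_apply, hP]
  have hVW : V * (P * Pᴴ) = 1 := by
    rw [hV]
    calc Q * Qᴴ * (P * Pᴴ) = Q * (Qᴴ * P) * Pᴴ := by simp only [mul_assoc]
    _ = 1 := by rw [hQP]; rw [Matrix.mul_one, hQPH]
  have hVinv : V⁻¹ = P * Pᴴ := Matrix.inv_eq_right_inv hVW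
  constructor
  · rw [hVinv, hV]
    calc Q * Qᴴ * H * (P * Pᴴ) = Q * (Qᴴ * H) * P * Pᴴ := by simp only [mul_assoc]
    _ = Q * (D * Qᴴ) * P * Pᴴ := by rw [hQH]
    _ = Q * D * (Qᴴ * P) * Pᴴ := by simp only [mul_assoc]
    _ = Q * D * Pᴴ := by rw [hQP, Matrix.mul_one]
    _ = H.conjTranspose := by
        calc Q * D * Pᴴ = H.conjTranspose * Q * Pᴴ := by rw [hHQ]
        _ = H.conjTranspose := by rw [Matrix.mul_assoc, hQPH, Matrix.mul_one]
  · rw [hVinv, hW]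
end

section
/- If ηHη⁻¹ is Hermitian for an invertible matrix η, then for every real t, η e^{-iHt} η⁻¹ is unitary. -/
/-!
Conjugating by `η` turns `e^{-iHt}` into `e^{-itK}` with `K = ηHη⁻¹` Hermitian, so the claim
reduces to the fact that the exponential of a skew-adjoint matrix is unitary: `(e^A)ᴴ = e^{-A}`
and `A` commutes with `-A`.
-/

open NormedSpace

theorem Matrix.exp_mem_unitary_of_mem_skewAdjoint {m 𝔸 : Type*} [Fintype m] [DecidableEq m]
    [NormedRing 𝔸] [NormedAlgebra ℚ 𝔸] [CompleteSpace 𝔸] [StarRing 𝔸] [ContinuousStar 𝔸]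
    {A : Matrix m m 𝔸} (hA : A ∈ skewAdjoint (Matrix m m 𝔸)) :
    exp A ∈ unitary (Matrix m m 𝔸) := by
  rw [Unitary.mem_iff, star_exp, skewAdjoint.mem_iff.mp hA,
    ← Matrix.exp_add_of_commute _ _ (Commute.refl A).neg_left,
    ← Matrix.exp_add_of_commute _ _ (Commute.refl A).neg_right,
    neg_add_cancel, add_neg_cancel, exp_zero, and_self]

theorem stmt_6 {n : ℕ} (H η : Matrix (Fin n) (Fin n) ℂ)
    (hη : IsUnit η) (hsim : (η * H * η⁻¹).IsHermitian) :
    ∀ t : ℝ,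
      let U := η * NormedSpace.exp ((-(Complex.I * t)) • H) * η⁻¹
      U * U.conjTranspose = 1 := by
  intro t U
  have hU : U = exp ((-(Complex.I * t)) • (η * H * η⁻¹)) := by
    rw [← Matrix.smul_mul, ← Matrix.mul_smul, Matrix.exp_conj η _ hη]
  have hskew_scalar : -(Complex.I * t) ∈ skewAdjoint ℂ := by
    simp [skewAdjoint.mem_iff]
  have hskew := hsim.isSelfAdjoint.smul_mem_skewAdjoint hskew_scalar
  rw [hU]
  exact Unitary.mul_star_self_of_mem (Matrix.exp_mem_unitary_of_mem_skewAdjoint hskew)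
end
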